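/- Let X be a measurable space, θ, θ' ∈ [0,1] with θ > θ', and let ℓ_sym be a measurable symmetric loss with constant K > 0 taking values in [0,K]. Let G be a nonempty class of measurable functions g : X → ℝ. Fix samples x_1,…,x_{n_CP} ∈ X and x'_1,…,x'_{n_CN} ∈ X and let R̂_corr^{ℓ_sym} be the empirical corrupted AUC risk on these samples. Suppose ĝ ∈ G minimizes R̂_corr^{ℓ_sym} over G, g* ∈ G minimizes the clean AUC risk R_AUC^{ℓ_sym} over G, and sup_{g ∈ G} |R_corr^{ℓ_sym}(g) − R̂_corr^{ℓ_sym}(g)| is finite. Then R_AUC^{ℓ_sym}(ĝ) − R_AUC^{ℓ_sym}(g*) ≤ (2/(θ − θ'))·sup_{g ∈ G} |R_corr^{ℓ_sym}(g) − R̂_corr^{ℓ_sym}(g)|. -/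

import Mathlib

/-!
For a symmetric loss the pairwise risks `A(μ, ν) = E_{x~μ} E_{x'~ν} ℓ(g x − g x')` satisfy
`A(μ, ν) + A(ν, μ) = K`, so `A(P, P) = A(N, N) = K / 2` and `A(N, P) = K − A(P, N)`. Expanding
both mixtures bilinearly then gives `R_corr = (θ − θ') R_AUC + K (1 − θ + θ') / 2`, so the clean
estimation error is `(θ − θ')⁻¹` times the corrupted one, which is at most twice the uniform
deviation because `ĝ` minimizes the empirical corrupted risk.
-/

open MeasureTheory

/-- The corrupted (mixture) distribution `θ·P + (1−θ)·N`. -/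
noncomputable def mix {X : Type*} [MeasurableSpace X] (P N : Measure X) (θ : ℝ) : Measure X :=
  ENNReal.ofReal θ • P + ENNReal.ofReal (1 - θ) • N

/-- The clean AUC risk `R_AUC^ℓ(g) = E_{x~P} E_{x'~N} [ℓ(g x − g x')]`. -/
noncomputable def aucRisk {X : Type*} [MeasurableSpace X] (P N : Measure X)
    (ℓ : ℝ → ℝ) (g : X → ℝ) : ℝ :=
  ∫ x, ∫ x', ℓ (g x - g x') ∂N ∂P

/-- The corrupted AUC risk `R_corr^ℓ(g) = E_{x~p_θ} E_{x'~p_θ'} [ℓ(g x − g x')]`. -/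
noncomputable def corrRisk {X : Type*} [MeasurableSpace X] (P N : Measure X)
    (θ θ' : ℝ) (ℓ : ℝ → ℝ) (g : X → ℝ) : ℝ :=
  ∫ x, ∫ x', ℓ (g x - g x') ∂(mix P N θ') ∂(mix P N θ)

/-- The empirical corrupted AUC risk on the samples `xs`, `ys`. -/
noncomputable def empCorrRisk {X : Type*} {nCP nCN : ℕ}
    (ℓ : ℝ → ℝ) (xs : Fin nCP → X) (ys : Fin nCN → X) (g : X → ℝ) : ℝ :=
  (1 / (nCP * nCN : ℝ)) * ∑ i : Fin nCP, ∑ j : Fin nCN, ℓ (g (xs i) - g (ys j))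

noncomputable def pairRisk {X : Type*} [MeasurableSpace X] (μ ν : Measure X)
    (ℓ : ℝ → ℝ) (g : X → ℝ) : ℝ :=
  ∫ x, ∫ x', ℓ (g x - g x') ∂ν ∂μ

instance {X : Type*} [MeasurableSpace X] (P N : Measure X) [IsFiniteMeasure P]
    [IsFiniteMeasure N] (θ : ℝ) : IsFiniteMeasure (mix P N θ) :=
  ⟨by simp [mix, ENNReal.mul_lt_top, measure_lt_top]⟩

section PairRisk

variable {X : Type*} [MeasurableSpace X] {ℓ : ℝ → ℝ} {C : ℝ} {g : X → ℝ}

lemma integral_mix (P N : Measure X) {θ : ℝ} (hθ : θ ∈ Set.Icc (0 : ℝ) 1) {f : X → ℝ}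
    (hfP : Integrable f P) (hfN : Integrable f N) :
    ∫ x, f x ∂(mix P N θ) = θ * ∫ x, f x ∂P + (1 - θ) * ∫ x, f x ∂N := by
  rw [mix, integral_add_measure (hfP.smul_measure ENNReal.ofReal_ne_top)
    (hfN.smul_measure ENNReal.ofReal_ne_top), integral_smul_measure, integral_smul_measure,
    ENNReal.toReal_ofReal hθ.1, ENNReal.toReal_ofReal (sub_nonneg.2 hθ.2), smul_eq_mul,
    smul_eq_mul]

lemma integrable_loss_sub (hℓ : Measurable ℓ) (hC : ∀ z, |ℓ z| ≤ C) (hg : Measurable g)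
    (c : ℝ) (ν : Measure X) [IsFiniteMeasure ν] :
    Integrable (fun x' => ℓ (c - g x')) ν :=
  .of_bound (hℓ.comp (measurable_const.sub hg)).aestronglyMeasurable C
    (.of_forall fun _ => hC _)

lemma integrable_loss_sub_prod (hℓ : Measurable ℓ) (hC : ∀ z, |ℓ z| ≤ C) (hg : Measurable g)
    (μ ν : Measure X) [IsFiniteMeasure μ] [IsFiniteMeasure ν] :
    Integrable (fun p : X × X => ℓ (g p.1 - g p.2)) (μ.prod ν) :=
  .of_bound (hℓ.comp ((hg.comp measurable_fst).sub (hg.comp measurable_snd))).aestronglyMeasurable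
    C (.of_forall fun _ => hC _)

lemma pairRisk_mix_left (hℓ : Measurable ℓ) (hC : ∀ z, |ℓ z| ≤ C) (hg : Measurable g)
    (P N ν : Measure X) [IsFiniteMeasure P] [IsFiniteMeasure N] [IsFiniteMeasure ν]
    {θ : ℝ} (hθ : θ ∈ Set.Icc (0 : ℝ) 1) :
    pairRisk (mix P N θ) ν ℓ g = θ * pairRisk P ν ℓ g + (1 - θ) * pairRisk N ν ℓ g :=
  integral_mix P N hθ (integrable_loss_sub_prod hℓ hC hg P ν).integral_prod_left
    (integrable_loss_sub_prod hℓ hC hg N ν).integral_prod_left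

lemma pairRisk_mix_right (hℓ : Measurable ℓ) (hC : ∀ z, |ℓ z| ≤ C) (hg : Measurable g)
    (μ P N : Measure X) [IsFiniteMeasure μ] [IsFiniteMeasure P] [IsFiniteMeasure N]
    {θ : ℝ} (hθ : θ ∈ Set.Icc (0 : ℝ) 1) :
    pairRisk μ (mix P N θ) ℓ g = θ * pairRisk μ P ℓ g + (1 - θ) * pairRisk μ N ℓ g := by
  have hinner (x : X) := integral_mix P N hθ (integrable_loss_sub hℓ hC hg (g x) P)
    (integrable_loss_sub hℓ hC hg (g x) N)
  rw [pairRisk, integral_congr_ae (.of_forall hinner), integral_add, integral_const_mul,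
    integral_const_mul, pairRisk, pairRisk]
  · exact (integrable_loss_sub_prod hℓ hC hg μ P).integral_prod_left.const_mul θ
  · exact (integrable_loss_sub_prod hℓ hC hg μ N).integral_prod_left.const_mul (1 - θ)

lemma pairRisk_add_pairRisk_swap (hℓ : Measurable ℓ) (hC : ∀ z, |ℓ z| ≤ C)
    (hg : Measurable g) {K : ℝ} (hsym : ∀ z : ℝ, ℓ z + ℓ (-z) = K)
    (μ ν : Measure X) [IsProbabilityMeasure μ] [IsProbabilityMeasure ν] :
    pairRisk μ ν ℓ g + pairRisk ν μ ℓ g = K := by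
  have hint := integrable_loss_sub_prod hℓ hC hg μ ν
  have hint_swap : Integrable (fun p : X × X => ℓ (g p.2 - g p.1)) (μ.prod ν) :=
    (integrable_loss_sub_prod hℓ hC hg ν μ).swap
  have hswap : pairRisk ν μ ℓ g = ∫ p, ℓ (g p.2 - g p.1) ∂(μ.prod ν) := by
    rw [pairRisk, ← integral_prod _ (integrable_loss_sub_prod hℓ hC hg ν μ),
      ← integral_prod_swap]
    rfl
  rw [hswap, pairRisk, ← integral_prod _ hint, ← integral_add hint hint_swap]
  have hsum (p : X × X) : ℓ (g p.1 - g p.2) + ℓ (g p.2 - g p.1) = K := by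
    simpa only [neg_sub] using hsym (g p.1 - g p.2)
  simp [hsum]

end PairRisk

lemma corrRisk_eq_mul_aucRisk_add {X : Type*} [MeasurableSpace X] (P N : Measure X)
    [IsProbabilityMeasure P] [IsProbabilityMeasure N] {θ θ' : ℝ}
    (hθ : θ ∈ Set.Icc (0 : ℝ) 1) (hθ' : θ' ∈ Set.Icc (0 : ℝ) 1) {ℓ : ℝ → ℝ} {C K : ℝ}
    (hℓ : Measurable ℓ) (hC : ∀ z, |ℓ z| ≤ C) (hsym : ∀ z : ℝ, ℓ z + ℓ (-z) = K)
    {g : X → ℝ} (hg : Measurable g) :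
    corrRisk P N θ θ' ℓ g = (θ - θ') * aucRisk P N ℓ g + K * (1 - (θ - θ')) / 2 := by
  change pairRisk (mix P N θ) (mix P N θ') ℓ g = (θ - θ') * pairRisk P N ℓ g + _
  rw [pairRisk_mix_left hℓ hC hg P N _ hθ, pairRisk_mix_right hℓ hC hg P P N hθ',
    pairRisk_mix_right hℓ hC hg N P N hθ']
  have hPP := pairRisk_add_pairRisk_swap hℓ hC hg hsym P P
  have hNN := pairRisk_add_pairRisk_swap hℓ hC hg hsym N N
  have hPN := pairRisk_add_pairRisk_swap hℓ hC hg hsym P N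
  linear_combination (θ * θ' / 2) * hPP + ((1 - θ) * (1 - θ') / 2) * hNN + ((1 - θ) * θ') * hPN

theorem estimation_error_via_uniform_deviation_general
    {X : Type*} [MeasurableSpace X] (P N : Measure X)
    [IsProbabilityMeasure P] [IsProbabilityMeasure N]
    (θ θ' : ℝ) (hθ : θ ∈ Set.Icc (0 : ℝ) 1) (hθ' : θ' ∈ Set.Icc (0 : ℝ) 1)
    (hθθ' : θ' < θ)
    (ℓ : ℝ → ℝ) (hℓ : Measurable ℓ) (K : ℝ)
    (hsym : ∀ z : ℝ, ℓ z + ℓ (-z) = K)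
    (hbound : ∀ z : ℝ, ℓ z ∈ Set.Icc (0 : ℝ) K)
    (G : Set (X → ℝ)) (hGmeas : ∀ g ∈ G, Measurable g)
    {nCP nCN : ℕ}
    (xs : Fin nCP → X) (ys : Fin nCN → X)
    (ghat : X → ℝ) (hghatG : ghat ∈ G)
    (hghat : ∀ g ∈ G, empCorrRisk ℓ xs ys ghat ≤ empCorrRisk ℓ xs ys g)
    (gstar : X → ℝ) (hgstarG : gstar ∈ G)
    (hbdd : BddAbove
      ((fun g => |corrRisk P N θ θ' ℓ g - empCorrRisk ℓ xs ys g|) '' G)) :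
    aucRisk P N ℓ ghat - aucRisk P N ℓ gstar ≤
      (2 / (θ - θ')) *
        sSup ((fun g => |corrRisk P N θ θ' ℓ g - empCorrRisk ℓ xs ys g|) '' G) := by
  set S := sSup ((fun g => |corrRisk P N θ θ' ℓ g - empCorrRisk ℓ xs ys g|) '' G)
  have hdev {g} (hg : g ∈ G) := abs_le.1 (le_csSup hbdd ⟨g, hg, rfl⟩ :
    |corrRisk P N θ θ' ℓ g - empCorrRisk ℓ xs ys g| ≤ S)
  have hC (z : ℝ) : |ℓ z| ≤ K := abs_le.2 ⟨by linarith [(hbound z).1, (hbound z).2], (hbound z).2⟩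
  have hcorr : (θ - θ') * (aucRisk P N ℓ ghat - aucRisk P N ℓ gstar) =
      corrRisk P N θ θ' ℓ ghat - corrRisk P N θ θ' ℓ gstar := by
    rw [corrRisk_eq_mul_aucRisk_add P N hθ hθ' hℓ hC hsym (hGmeas ghat hghatG),
      corrRisk_eq_mul_aucRisk_add P N hθ hθ' hℓ hC hsym (hGmeas gstar hgstarG)]
    ring
  rw [div_mul_eq_mul_div, le_div_iff₀ (sub_pos.2 hθθ'), mul_comm, hcorr]
  linarith [hdev hghatG, hdev hgstarG, hghat gstar hgstarG]

/-- Lemma 1 (relation between the estimation error of the clean AUC risk and the uniform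
deviation of the corrupted AUC risk): if `ĝ ∈ G` minimizes the empirical corrupted AUC risk,
`g* ∈ G` minimizes the clean AUC risk, and the uniform deviation is finite, then
`R_AUC(ĝ) − R_AUC(g*) ≤ (2/(θ − θ'))·sup_{g ∈ G} |R_corr(g) − R̂_corr(g)|`. -/
theorem estimation_error_via_uniform_deviation
    {X : Type*} [MeasurableSpace X] (P N : Measure X)
    [IsProbabilityMeasure P] [IsProbabilityMeasure N]
    (θ θ' : ℝ) (hθ : θ ∈ Set.Icc (0 : ℝ) 1) (hθ' : θ' ∈ Set.Icc (0 : ℝ) 1)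
    (hθθ' : θ' < θ)
    (ℓ : ℝ → ℝ) (hℓ : Measurable ℓ) (K : ℝ) (hK : 0 < K)
    (hsym : ∀ z : ℝ, ℓ z + ℓ (-z) = K)
    (hbound : ∀ z : ℝ, ℓ z ∈ Set.Icc (0 : ℝ) K)
    (G : Set (X → ℝ)) (hGne : G.Nonempty) (hGmeas : ∀ g ∈ G, Measurable g)
    {nCP nCN : ℕ} (hnCP : 0 < nCP) (hnCN : 0 < nCN)
    (xs : Fin nCP → X) (ys : Fin nCN → X)
    (ghat : X → ℝ) (hghatG : ghat ∈ G)
    (hghat : ∀ g ∈ G, empCorrRisk ℓ xs ys ghat ≤ empCorrRisk ℓ xs ys g)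
    (gstar : X → ℝ) (hgstarG : gstar ∈ G)
    (hgstar : ∀ g ∈ G, aucRisk P N ℓ gstar ≤ aucRisk P N ℓ g)
    (hbdd : BddAbove
      ((fun g => |corrRisk P N θ θ' ℓ g - empCorrRisk ℓ xs ys g|) '' G)) :
    aucRisk P N ℓ ghat - aucRisk P N ℓ gstar ≤
      (2 / (θ - θ')) *
        sSup ((fun g => |corrRisk P N θ θ' ℓ g - empCorrRisk ℓ xs ys g|) '' G) :=
  estimation_error_via_uniform_deviation_general P N θ θ' hθ hθ' hθθ' ℓ hℓ K hsym hbound G hGmeas xs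
    ys ghat hghatG hghat gstar hgstarG hbdd
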